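/- arXiv:2512.06815 — 3 statements merged into one kernel-verified Lean document; each statement's English description precedes it below -/
import Mathlib

section
/- Let S : Finset (Fin n) → ℝ satisfy strong subadditivity (for pairwise disjoint A,B,C: S(A∪B) + S(B∪C) ≥ S(A∪B∪C) + S(B)) and define I(A:B) = S(A) + S(B) − S(A∪B) for disjoint A, B. Let G be the graph on Fin n with an edge i–j exactly when I({i}:{j}) > 0. If G is connected, then for every partition of Fin n into two nonempty sets A and B, we have I(A:B) > 0. -/
theorem stmt_2 (n : ℕ) (S : Finset (Fin n) → ℝ)
    (hssa : ∀ A B C : Finset (Fin n), Disjoint A B → Disjoint A C → Disjoint B C →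
      S (A ∪ B) + S (B ∪ C) ≥ S (A ∪ B ∪ C) + S B)
    (G : SimpleGraph (Fin n))
    (hG : ∀ i j : Fin n, G.Adj i j ↔ i ≠ j ∧ 0 < S {i} + S {j} - S {i, j})
    (hconn : G.Connected) :
    ∀ A B : Finset (Fin n), A.Nonempty → B.Nonempty → Disjoint A B →
      A ∪ B = Finset.univ → 0 < S A + S B - S (A ∪ B) := by
  -- monotonicity of mutual information in the first argument
  have mono : ∀ A' A B : Finset (Fin n), A' ⊆ A → Disjoint A B →
      S A' + S B - S (A' ∪ B) ≤ S A + S B - S (A ∪ B) := by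
    intro A' A B hsub hdisj
    have h1 : Disjoint (A \ A') A' := Finset.sdiff_disjoint
    have h2 : Disjoint (A \ A') B := hdisj.mono_left (Finset.sdiff_subset)
    have h3 : Disjoint A' B := hdisj.mono_left hsub
    have := hssa (A \ A') A' B h1 h2 h3
    rw [Finset.sdiff_union_of_subset hsub] at this
    linarith
  intro A B hA hB hdisj huniv
  obtain ⟨a, ha⟩ := hA
  obtain ⟨b, hb⟩ := hB
  obtain ⟨p⟩ := hconn.preconnected a b
  obtain ⟨d, _, hdfst, hdsnd⟩ := p.exists_boundary_dart (↑A : Set (Fin n))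
    (by simpa using ha)
    (by simp only [Finset.coe_sort_coe, Finset.mem_coe]
        exact fun h => Finset.disjoint_left.mp hdisj h hb)
  have hadj : G.Adj d.fst d.snd := d.adj
  obtain ⟨hne, hI⟩ := (hG d.fst d.snd).mp hadj
  have hiA : d.fst ∈ A := by simpa using hdfst
  have hjA : d.snd ∉ A := by simpa using hdsnd
  have hjB : d.snd ∈ B := by
    have : d.snd ∈ A ∪ B := huniv ▸ Finset.mem_univ _
    exact (Finset.mem_union.mp this).resolve_left hjA
  have hij : ({d.fst, d.snd} : Finset (Fin n)) = {d.fst} ∪ {d.snd} := rfl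
  rw [hij] at hI
  have hdisjAj : Disjoint A ({d.snd} : Finset (Fin n)) :=
    hdisj.mono_right (Finset.singleton_subset_iff.mpr hjB)
  have step1 : S {d.fst} + S {d.snd} - S ({d.fst} ∪ {d.snd}) ≤
      S A + S {d.snd} - S (A ∪ {d.snd}) :=
    mono _ _ _ (Finset.singleton_subset_iff.mpr hiA) hdisjAj
  have step2 : S {d.snd} + S A - S ({d.snd} ∪ A) ≤ S B + S A - S (B ∪ A) :=
    mono _ _ _ (Finset.singleton_subset_iff.mpr hjB) hdisj.symm
  rw [Finset.union_comm {d.snd} A, Finset.union_comm B A] at step2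
  linarith
end

section
/- Let S : Finset (Fin n) → ℝ satisfy strong subadditivity (for pairwise disjoint A,B,C: S(A∪B) + S(B∪C) ≥ S(A∪B∪C) + S(B)), with n ≥ 2, and define I(A:B) = S(A) + S(B) − S(A∪B). If I({i}:{j}) > 0 for all i ≠ j in Fin n, then for every partition of Fin n into two nonempty disjoint sets A, B, I(A:B) > 0. -/
theorem stmt_3 (n : ℕ) (hn : 2 ≤ n) (S : Finset (Fin n) → ℝ)
    (hssa : ∀ A B C : Finset (Fin n), Disjoint A B → Disjoint A C → Disjoint B C →
      S (A ∪ B) + S (B ∪ C) ≥ S (A ∪ B ∪ C) + S B)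
    (hpair : ∀ i j : Fin n, i ≠ j → 0 < S {i} + S {j} - S {i, j}) :
    ∀ A B : Finset (Fin n), A.Nonempty → B.Nonempty → Disjoint A B →
      A ∪ B = Finset.univ → 0 < S A + S B - S (A ∪ B) := by
  intro A B hA hB hAB _
  obtain ⟨i, hi⟩ := hA
  obtain ⟨j, hj⟩ := hB
  have hiB : i ∉ B := Finset.disjoint_left.mp hAB hi
  have hij : i ≠ j := fun h => hiB (h ▸ hj)
  -- Step 1: S A + S ({i} ∪ B) ≥ S (A ∪ B) + S {i}
  have h1 := hssa (A \ {i}) {i} B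
    (Finset.sdiff_disjoint)
    (Finset.disjoint_of_subset_left Finset.sdiff_subset hAB)
    (Finset.disjoint_singleton_left.mpr hiB)
  rw [Finset.sdiff_union_self_eq_union,
    Finset.union_eq_left.mpr (Finset.singleton_subset_iff.mpr hi)] at h1
  -- Step 2: S ({i,j}) + S B ≥ S ({i} ∪ B) + S {j}
  have h2 := hssa {i} {j} (B \ {j})
    (Finset.disjoint_singleton.mpr hij)
    (by simp [Finset.disjoint_singleton_left, hiB])
    (Finset.disjoint_sdiff)
  have hjB : {j} ∪ (B \ {j}) = B := by
    rw [Finset.union_comm, Finset.sdiff_union_self_eq_union,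
      Finset.union_eq_left.mpr (Finset.singleton_subset_iff.mpr hj)]
  rw [Finset.union_assoc, hjB, ← Finset.insert_eq] at h2
  have hp := hpair i j hij
  linarith
end

section
/- Let S : Finset (Fin 3) → ℝ with S(∅) = 0, satisfying subadditivity on disjoint sets and purity S(A) = S(Aᶜ). Suppose the full tripartite entropy is additive: S({0,1,2}) = S({0}) + S({1}) + S({2}). Then the tripartite information vanishes: I_3 := S({0}) + S({1}) + S({2}) − S({0,1}) − S({0,2}) − S({1,2}) + S({0,1,2}) = 0. -/
theorem stmt_15 (S : Finset (Fin 3) → ℝ)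
    (h0 : S ∅ = 0)
    (hsub : ∀ A B : Finset (Fin 3), Disjoint A B → S (A ∪ B) ≤ S A + S B)
    (hpure : ∀ A : Finset (Fin 3), S A = S Aᶜ)
    (hadd : S {0, 1, 2} = S {0} + S {1} + S {2}) :
    S {0} + S {1} + S {2} - S {0, 1} - S {0, 2} - S {1, 2} + S {0, 1, 2} = 0 := by
  have h01 : S {0, 1} ≤ S {0} + S {1} := by
    have := hsub {0} {1} (by decide)
    simpa using this
  have h02 : S {0, 2} ≤ S {0} + S {2} := by
    have := hsub {0} {2} (by decide)
    simpa using this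
  have h12 : S {1, 2} ≤ S {1} + S {2} := by
    have := hsub {1} {2} (by decide)
    simpa using this
  have e01 : ({0, 1} ∪ {2} : Finset (Fin 3)) = {0, 1, 2} := by decide
  have e02 : ({0, 2} ∪ {1} : Finset (Fin 3)) = {0, 2, 1} := by decide
  have e12 : ({1, 2} ∪ {0} : Finset (Fin 3)) = {1, 2, 0} := by decide
  have r1 : ({0, 2, 1} : Finset (Fin 3)) = {0, 1, 2} := by decide
  have r2 : ({1, 2, 0} : Finset (Fin 3)) = {0, 1, 2} := by decide
  have g01 : S {0, 1, 2} ≤ S {0, 1} + S {2} := by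
    have := hsub {0, 1} {2} (by decide); rwa [e01] at this
  have g02 : S {0, 1, 2} ≤ S {0, 2} + S {1} := by
    have := hsub {0, 2} {1} (by decide); rw [e02, r1] at this; exact this
  have g12 : S {0, 1, 2} ≤ S {1, 2} + S {0} := by
    have := hsub {1, 2} {0} (by decide); rw [e12, r2] at this; exact this
  have eq01 : S {0, 1} = S {0} + S {1} := by linarith
  have eq02 : S {0, 2} = S {0} + S {2} := by linarith
  have eq12 : S {1, 2} = S {1} + S {2} := by linarith
  linarith
end
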